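/- Let a, b, c > 0 and p < q < r be real numbers, and let f(u) = -a u^p + b u^q - c u^r for u > 0. Then f(u) < 0 for every u > 0 if and only if a > b · ((r-q)/(r-p)) · (b(q-p)/(c(r-p)))^{(q-p)/(r-q)}. -/

import Mathlib

/-!
Factor `f u = u ^ p * (g u - a)` with `g u = b * u ^ (q - p) - c * u ^ (r - p)`, so `f < 0` on
`(0, ∞)` exactly when `a` exceeds the maximum of `g`. For exponents `0 < s < t` the function
`u ↦ b * u ^ s - c * u ^ t` peaks at the point `u₀` where `b s u₀ ^ s = c t u₀ ^ t`; writing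
`u = u₀ y`, the bound by the value at `u₀` becomes Bernoulli's inequality
`y ^ s ≤ (s / t) y ^ t + (t - s) / t`.
-/

open Real

theorem rpow_le_div_mul_rpow_add {s t y : ℝ} (hs : 0 < s) (hst : s < t) (hy : 0 ≤ y) :
    y ^ s ≤ s / t * y ^ t + (t - s) / t := by
  have ht : 0 < t := hs.trans hst
  have h := rpow_one_add_le_one_add_mul_self (s := y ^ t - 1)
    (by linarith [rpow_nonneg hy t]) (div_nonneg hs.le ht.le) ((div_le_one ht).2 hst.le)
  rw [add_sub_cancel, ← rpow_mul hy, mul_div_cancel₀ _ ht.ne'] at h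
  calc y ^ s ≤ 1 + s / t * (y ^ t - 1) := h
    _ = s / t * y ^ t + (t - s) / t := by field_simp; ring

theorem neg_mul_rpow_add_mul_rpow_sub_mul_rpow_neg_iff {a b c p q r u : ℝ} (hu : 0 < u) :
    -a * u ^ p + b * u ^ q - c * u ^ r < 0 ↔ b * u ^ (q - p) - c * u ^ (r - p) < a := by
  have hsplit : ∀ x, u ^ x = u ^ p * u ^ (x - p) := fun x => by
    rw [← rpow_add hu, add_sub_cancel]
  have hfactor : -a * u ^ p + b * u ^ q - c * u ^ r =
      u ^ p * (b * u ^ (q - p) - c * u ^ (r - p) - a) := by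
    rw [hsplit q, hsplit r]
    ring
  rw [hfactor, ← mul_zero (u ^ p), mul_lt_mul_iff_of_pos_left (rpow_pos_of_pos hu p), sub_neg]

namespace PowerGap

noncomputable def peak (b c s t : ℝ) : ℝ := (b * s / (c * t)) ^ (t - s)⁻¹

noncomputable def maxValue (b c s t : ℝ) : ℝ :=
  b * ((t - s) / t) * (b * s / (c * t)) ^ (s / (t - s))

variable {b c s t : ℝ}

theorem peak_pos (hb : 0 < b) (hc : 0 < c) (hs : 0 < s) (hst : s < t) : 0 < peak b c s t := by
  have ht : 0 < t := hs.trans hst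
  unfold peak
  positivity

theorem peak_rpow (hb : 0 < b) (hc : 0 < c) (hs : 0 < s) (hst : s < t) (x : ℝ) :
    peak b c s t ^ x = (b * s / (c * t)) ^ (x / (t - s)) := by
  have ht : 0 < t := hs.trans hst
  rw [peak, ← rpow_mul (by positivity), inv_mul_eq_div]

theorem mul_peak_rpow_right (hb : 0 < b) (hc : 0 < c) (hs : 0 < s) (hst : s < t) :
    c * peak b c s t ^ t = s / t * (b * peak b c s t ^ s) := by
  have ht : 0 < t := hs.trans hst
  have hsplit : peak b c s t ^ t = peak b c s t ^ s * peak b c s t ^ (t - s) := by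
    rw [← rpow_add (peak_pos hb hc hs hst), add_sub_cancel]
  rw [hsplit, peak_rpow hb hc hs hst (t - s), div_self (sub_pos.2 hst).ne', rpow_one]
  field_simp

theorem mul_rpow_peak_mul (hb : 0 < b) (hc : 0 < c) (hs : 0 < s) (hst : s < t) :
    b * peak b c s t ^ s * ((t - s) / t) = maxValue b c s t := by
  rw [peak_rpow hb hc hs hst, maxValue]
  ring

theorem mul_rpow_sub_mul_rpow_peak_mul (hb : 0 < b) (hc : 0 < c) (hs : 0 < s) (hst : s < t)
    {y : ℝ} (hy : 0 ≤ y) :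
    b * (peak b c s t * y) ^ s - c * (peak b c s t * y) ^ t =
      b * peak b c s t ^ s * (y ^ s - s / t * y ^ t) := by
  have hu₀ := (peak_pos hb hc hs hst).le
  rw [mul_rpow hu₀ hy, mul_rpow hu₀ hy, ← mul_assoc c, mul_peak_rpow_right hb hc hs hst]
  ring

theorem mul_rpow_sub_mul_rpow_le (hb : 0 < b) (hc : 0 < c) (hs : 0 < s) (hst : s < t)
    {u : ℝ} (hu : 0 < u) : b * u ^ s - c * u ^ t ≤ maxValue b c s t := by
  have hu₀ := peak_pos hb hc hs hst
  have hy : 0 ≤ u / peak b c s t := by positivity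
  rw [← mul_div_cancel₀ u hu₀.ne', mul_rpow_sub_mul_rpow_peak_mul hb hc hs hst hy,
    ← mul_rpow_peak_mul hb hc hs hst]
  gcongr
  linarith [rpow_le_div_mul_rpow_add hs hst hy]

theorem mul_rpow_sub_mul_rpow_peak (hb : 0 < b) (hc : 0 < c) (hs : 0 < s) (hst : s < t) :
    b * peak b c s t ^ s - c * peak b c s t ^ t = maxValue b c s t := by
  rw [mul_peak_rpow_right hb hc hs hst, ← mul_rpow_peak_mul hb hc hs hst]
  field_simp [(hs.trans hst).ne']

end PowerGap

open PowerGap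

theorem stmt_2_general (a b c p q r : ℝ) (hb : 0 < b) (hc : 0 < c)
    (hpq : p < q) (hqr : q < r)
    (f : ℝ → ℝ) (hf : f = fun u : ℝ => -a * u ^ p + b * u ^ q - c * u ^ r) :
    (∀ u : ℝ, 0 < u → f u < 0) ↔
      a > b * ((r - q) / (r - p)) *
        (b * (q - p) / (c * (r - p))) ^ ((q - p) / (r - q)) := by
  subst hf
  have hs : 0 < q - p := sub_pos.2 hpq
  have hst : q - p < r - p := sub_lt_sub_right hqr p
  have hT : b * ((r - q) / (r - p)) * (b * (q - p) / (c * (r - p))) ^ ((q - p) / (r - q)) =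
      maxValue b c (q - p) (r - p) := by
    rw [maxValue, sub_sub_sub_cancel_right]
  rw [hT, gt_iff_lt]
  constructor
  · intro h
    have hu₀ := peak_pos hb hc hs hst
    rw [← mul_rpow_sub_mul_rpow_peak hb hc hs hst]
    exact (neg_mul_rpow_add_mul_rpow_sub_mul_rpow_neg_iff hu₀).1 (h _ hu₀)
  · intro h u hu
    exact (neg_mul_rpow_add_mul_rpow_sub_mul_rpow_neg_iff hu).2
      ((mul_rpow_sub_mul_rpow_le hb hc hs hst hu).trans_lt h)

/-- `f u < 0` for all `u > 0` iff `a > b ((r-q)/(r-p)) (b(q-p)/(c(r-p)))^{(q-p)/(r-q)}`. -/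
theorem stmt_2 (a b c p q r : ℝ) (ha : 0 < a) (hb : 0 < b) (hc : 0 < c)
    (hpq : p < q) (hqr : q < r)
    (f : ℝ → ℝ) (hf : f = fun u : ℝ => -a * u ^ p + b * u ^ q - c * u ^ r) :
    (∀ u : ℝ, 0 < u → f u < 0) ↔
      a > b * ((r - q) / (r - p)) *
        (b * (q - p) / (c * (r - p))) ^ ((q - p) / (r - q)) :=
  stmt_2_general a b c p q r hb hc hpq hqr f hf
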